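/- arXiv:1710.02440 — 2 statements merged into one kernel-verified Lean document; each statement's English description precedes it below -/
import Mathlib

section
/- Let n > 2k ≥ 6. Every intersecting family F of k-element subsets of [n] with C(n−4,k−3) < γ(F) < C(n−3,k−2) satisfies |F| < C(n−2,k−2) + 2·C(n−3,k−2). -/
open Finset

def IntersectingFam (F : Finset (Finset ℕ)) : Prop :=
  ∀ A ∈ F, ∀ B ∈ F, (A ∩ B).Nonempty

def CrossIntersecting (𝒜 ℬ : Finset (Finset ℕ)) : Prop :=
  ∀ A ∈ 𝒜, ∀ B ∈ ℬ, (A ∩ B).Nonempty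

/-- The degree of an element `i`: the number of sets of `F` containing `i`. -/
def famDeg (F : Finset (Finset ℕ)) (i : ℕ) : ℕ := (F.filter (fun A => i ∈ A)).card

/-- The maximal degree `Δ(F)` over the ground set `[n]`. -/
def maxDeg (n : ℕ) (F : Finset (Finset ℕ)) : ℕ := (Finset.Icc 1 n).sup (famDeg F)

/-- The diversity `γ(F) = |F| − Δ(F)`. -/
def diversity (n : ℕ) (F : Finset (Finset ℕ)) : ℕ := F.card - maxDeg n F

/-- The degree of a subset `S`: the number of sets of `F` containing `S`. -/
def tDeg (F : Finset (Finset ℕ)) (S : Finset ℕ) : ℕ := (F.filter (fun A => S ⊆ A)).card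

/-- Lexicographic order: `A ⪯ B` iff `A ⊇ B` or `min (A \ B) < min (B \ A)`. -/
def lexLE (A B : Finset ℕ) : Prop := B ⊆ A ∨ (A \ B).min < (B \ A).min

instance : DecidableRel lexLE := fun A B => by unfold lexLE; exact inferInstance

def lexLT (A B : Finset ℕ) : Prop := lexLE A B ∧ A ≠ B

/-- Lex family with characteristic set `X` on ground set `[2,n]`:
`L(X,a) = {A ⊆ [2,n] : |A| = a, A ⪯ X ∩ [2,n]}`. -/
def lexFam (n a : ℕ) (X : Finset ℕ) : Finset (Finset ℕ) :=
  ((Finset.Icc 2 n).powersetCard a).filter (fun A => lexLE A (X ∩ Finset.Icc 2 n))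

/-- Lex family with characteristic set `X` on ground set `[n]`:
`L(X,c) = {A ⊆ [n] : |A| = c, A ⪯ X}`. -/
def lexFam1 (n c : ℕ) (X : Finset ℕ) : Finset (Finset ℕ) :=
  ((Finset.Icc 1 n).powersetCard c).filter (fun A => lexLE A X)

/-- Resistant pairs for uniformity `k` on ground set `[n]`. -/
def ResistantPair (n k : ℕ) (S T : Finset ℕ) : Prop :=
  (S = ({1, 4} : Finset ℕ) ∧ T = ({2, 3, 4} : Finset ℕ)) ∨
  (1 ∈ S ∧ S ⊆ Finset.Icc 1 n ∧ T ⊆ Finset.Icc 2 n ∧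
    ∃ j : ℕ, T.max = (j : WithTop ℕ) ∧ S ∩ T = {j} ∧ S ∪ T = Finset.Icc 1 j ∧
      S.card ≤ k ∧ T.card ≤ k ∧
      ∀ i : ℕ, 4 ≤ i → i ≤ j → (Finset.Icc 1 i ∩ S).card < (Finset.Icc 1 i \ S).card)

/-- `(a,b)`-resistant pairs on ground set `[n]`. -/
def ABResistantPair (n a b : ℕ) (S T : Finset ℕ) : Prop :=
  (T = Finset.Icc 1 (b - a + 2) ∧ S = ({1, b - a + 2} : Finset ℕ)) ∨
  (S ⊆ Finset.Icc 1 n ∧ T ⊆ Finset.Icc 1 n ∧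
    ∃ j : ℕ, T.max = (j : WithTop ℕ) ∧ S ∩ T = {j} ∧ S ∪ T = Finset.Icc 1 j ∧
      S.card ≤ a ∧ T.card ≤ b ∧
      ∀ i : ℕ, b - a + 2 ≤ i → i ≤ j →
        ((Finset.Icc 1 i ∩ S).card : ℤ) - (a : ℤ) < ((Finset.Icc 1 i \ S).card : ℤ) - (b : ℤ))

/-- Resistant numbers: `γ` is resistant if in its `(n−k−1)`-cascade form
`γ = Σ_{i=1}^s C(n−b_i, n−k−i)` (with `1 ≤ b_1 < … < b_s`) one has `|S_γ| ≤ k`,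
`s ≤ k−1` and `b_i > 2i+2` for each `i`; in addition `C(n−4,k−3)` is resistant. -/
def IsResistantNum (n k γ : ℕ) : Prop :=
  γ = Nat.choose (n - 4) (k - 3) ∨
  ∃ (s : ℕ) (b : ℕ → ℕ), 1 ≤ s ∧ 1 ≤ b 1 ∧
    (∀ i j, 1 ≤ i → i < j → j ≤ s → b i < b j) ∧
    γ = ∑ i ∈ Finset.Icc 1 s, Nat.choose (n - b i) (n - k - i) ∧
    s ≤ k - 1 ∧
    (insert (b s) (Finset.Icc 2 (b s) \ (Finset.Icc 1 s).image b)).card ≤ k ∧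
    (∀ i, 1 ≤ i → i ≤ s → b i > 2 * i + 2)

/-- The family `J_i`. -/
def Jfam (n k i : ℕ) : Finset (Finset ℕ) :=
  {Finset.Icc 2 (k+1), Finset.Icc (i+1) (k+i)} ∪
    ((Finset.Icc 1 n).powersetCard k).filter
      (fun F => 1 ∈ F ∧ (F ∩ Finset.Icc 2 (k+1)).Nonempty ∧ (F ∩ Finset.Icc (i+1) (k+i)).Nonempty)

/-- Two families are isomorphic if one is obtained from the other by a permutation
of the ground set `[n]`. -/
def IsomorphicFam (n : ℕ) (F G : Finset (Finset ℕ)) : Prop :=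
  ∃ σ : Equiv.Perm ℕ, (Finset.Icc 1 n).image σ = Finset.Icc 1 n ∧
    F.image (fun A => A.image σ) = G

/-- `F` is isomorphic to a subfamily of `G`. -/
def IsoSubfamily (n : ℕ) (F G : Finset (Finset ℕ)) : Prop :=
  ∃ σ : Equiv.Perm ℕ, (Finset.Icc 1 n).image σ = Finset.Icc 1 n ∧
    F.image (fun A => A.image σ) ⊆ G

/-- `L` is an initial segment of the lex order on `k`-subsets of `[2,n]`. -/
def IsInitialSeg (n k : ℕ) (L : Finset (Finset ℕ)) : Prop :=
  L ⊆ (Finset.Icc 2 n).powersetCard k ∧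
  ∀ A ∈ L, ∀ B ∈ (Finset.Icc 2 n).powersetCard k, lexLE B A → B ∈ L

/-- The maximal intersecting family `F_l` whose sets avoiding `1` are exactly `L`. -/
def maxFam (n k : ℕ) (L : Finset (Finset ℕ)) : Finset (Finset ℕ) :=
  L ∪ ((Finset.Icc 1 n).powersetCard k).filter
    (fun A => 1 ∈ A ∧ ∀ B ∈ L, (A ∩ B).Nonempty)

/-- The sets `T` allowed in the recursive definition of a `T_l`-neutral pair:
`T_l` is allowed, and whenever `T'` is allowed so is `T' ∪ {2|T'|}`. -/
inductive NeutralSet (T0 : Finset ℕ) : Finset ℕ → Prop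
  | base : NeutralSet T0 T0
  | step (T' : Finset ℕ) : NeutralSet T0 T' → NeutralSet T0 (insert (2 * T'.card) T')

/-- The family `A_0(n,k,s)`. -/
def A0fam (n k s : ℕ) : Finset (Finset ℕ) :=
  ((Finset.Icc 1 n).powersetCard k).filter (fun A => (A ∩ Finset.Icc 1 s).Nonempty)


open Finset.Colex
open scoped FinsetFamily

attribute [-instance] instDecidableEqFin

namespace Stmt5Aux

lemma step_le {u a : ℕ} (h : 2*a + 1 ≤ u) : Nat.choose u a ≤ Nat.choose u (a+1) := by
  have h1 := Nat.choose_succ_right_eq u a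
  have k1 : Nat.choose u a * (a+1) ≤ Nat.choose u a * (u - a) :=
    Nat.mul_le_mul_left _ (by omega)
  rw [← h1] at k1
  exact Nat.le_of_mul_le_mul_right k1 (by omega)

lemma step_lt {u a : ℕ} (h : 2*a + 2 ≤ u) : Nat.choose u a < Nat.choose u (a+1) := by
  have h1 := Nat.choose_succ_right_eq u a
  by_contra hcon
  push_neg at hcon
  have h3 : 0 < Nat.choose u (a+1) := Nat.choose_pos (by omega)
  have k1 : Nat.choose u (a+1) * (a+2) ≤ Nat.choose u (a+1) * (u - a) :=
    Nat.mul_le_mul_left _ (by omega)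
  have k2 : Nat.choose u (a+1) * (u - a) ≤ Nat.choose u a * (u - a) :=
    Nat.mul_le_mul_right _ hcon
  rw [← h1] at k2
  have := k1.trans k2
  have := Nat.le_of_mul_le_mul_left this h3
  omega

/-- monotone in bottom index within the lower half-ish range -/
lemma lemA : ∀ (d a b u : ℕ), b - a ≤ d → a ≤ b → a + b ≤ u → Nat.choose u a ≤ Nat.choose u b := by
  intro d
  induction d with
  | zero =>
    intro a b u h1 h2 _
    have : a = b := by omega
    subst this; exact le_rfl
  | succ d ih =>
    intro a b u h1 h2 h3
    rcases eq_or_lt_of_le h2 with rfl | hab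
    · exact le_rfl
    rcases eq_or_lt_of_le h3 with heq | hlt
    · -- a + b = u, so C(u,a) = C(u,b)
      have hb : b ≤ u := by omega
      have h5 : u - b = a := by omega
      have e : Nat.choose u (u - b) = Nat.choose u b := Nat.choose_symm hb
      rw [h5] at e
      exact e.le
    · have h4 : Nat.choose u a ≤ Nat.choose u (a+1) := step_le (by omega)
      exact h4.trans (ih (a+1) b u (by omega) (by omega) (by omega))

lemma lemB {a b u : ℕ} (h1 : a < b) (h2 : a + b < u) : Nat.choose u a < Nat.choose u b := by
  have h4 : Nat.choose u a < Nat.choose u (a+1) := step_lt (by omega)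
  exact h4.trans_le (lemA (b - (a+1)) (a+1) b u le_rfl (by omega) (by omega))

/-- `C(v,r) ≤ C(v,c)` when `c ≤ r` and `v ≤ r + c`. -/
lemma lemA' {c r v : ℕ} (hcr : c ≤ r) (hv : v ≤ r + c) : Nat.choose v r ≤ Nat.choose v c := by
  rcases le_or_gt r v with h | h
  · calc Nat.choose v r = Nat.choose v (v - (v - r)) := by rw [Nat.sub_sub_self h]
      _ = Nat.choose v (v - r) := Nat.choose_symm (by omega)
      _ ≤ Nat.choose v c := lemA (c - (v-r)) (v - r) c v le_rfl (by omega) (by omega)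
  · simp [Nat.choose_eq_zero_of_lt h]

/-- strict version: `C(v,r) < C(v,c)` when `c < r ≤ v ≤ r + c - 1`. -/
lemma lemB' {c r v : ℕ} (hcr : c < r) (hrv : r ≤ v) (hv : v + 1 ≤ r + c) :
    Nat.choose v r < Nat.choose v c := by
  calc Nat.choose v r = Nat.choose v (v - (v - r)) := by rw [Nat.sub_sub_self hrv]
    _ = Nat.choose v (v - r) := Nat.choose_symm (by omega)
    _ < Nat.choose v c := lemB (by omega) (by omega)

lemma pascal (y r : ℕ) (hr : 1 ≤ r) :
    Nat.choose (y+1) r = Nat.choose y (r-1) + Nat.choose y r := by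
  obtain ⟨r', rfl⟩ : ∃ r', r = r' + 1 := ⟨r - 1, by omega⟩
  simp [Nat.choose_succ_succ']

/-- weak monotonicity of `C(·,r) - C(·,c)` -/
lemma lgZ {c r : ℕ} (hc : 1 ≤ c) (hcr : c ≤ r) : ∀ v y : ℕ, r + c ≤ v + 2 → v ≤ y →
    (Nat.choose v r : ℤ) - Nat.choose v c ≤ (Nat.choose y r : ℤ) - Nat.choose y c := by
  intro v y hv hvy
  induction y, hvy using Nat.le_induction with
  | base => exact le_rfl
  | succ y hvy ih =>
    have p1 : Nat.choose (y+1) r = Nat.choose y (r-1) + Nat.choose y r := pascal y r (by omega)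
    have p2 : Nat.choose (y+1) c = Nat.choose y (c-1) + Nat.choose y c := pascal y c hc
    have hstep : Nat.choose y (c-1) ≤ Nat.choose y (r-1) :=
      lemA ((r-1) - (c-1)) (c-1) (r-1) y le_rfl (by omega) (by omega)
    push_cast [p1, p2]
    push_cast at ih
    omega

/-- strict monotonicity of `C(·,r) - C(·,c)` -/
lemma lgZ' {c r : ℕ} (hc : 1 ≤ c) (hcr : c < r) {v y : ℕ} (hv : r + c ≤ v + 1) (hvy : v < y) :
    (Nat.choose v r : ℤ) - Nat.choose v c + 1 ≤ (Nat.choose y r : ℤ) - Nat.choose y c := by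
  have p1 : Nat.choose (v+1) r = Nat.choose v (r-1) + Nat.choose v r := pascal v r (by omega)
  have p2 : Nat.choose (v+1) c = Nat.choose v (c-1) + Nat.choose v c := pascal v c hc
  have hstep : Nat.choose v (c-1) < Nat.choose v (r-1) := lemB (by omega) (by omega)
  have h2 := lgZ hc hcr.le (v+1) y (by omega) (by omega)
  push_cast [p1, p2] at h2 ⊢
  omega

/-- `C(w+1,r) + (y - w) ≤ C(y,r)` for `2 ≤ r ≤ w`, `w + 2 ≤ y`. -/
lemma lemC {r w : ℕ} (hr : 2 ≤ r) (hw : r ≤ w) : ∀ y, w + 2 ≤ y →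
    Nat.choose (w+1) r + (y - w) ≤ Nat.choose y r := by
  intro y
  induction y with
  | zero => omega
  | succ y ih =>
    intro hy
    rcases eq_or_lt_of_le hy with heq | hlt
    · -- y + 1 = w + 2, i.e. y = w + 1
      have hyw : y = w + 1 := by omega
      subst hyw
      have p1 := pascal (w+1) r (by omega)
      have : w + 1 ≤ Nat.choose (w+1) (r-1) := by
        calc w + 1 = Nat.choose (w+1) 1 := (Nat.choose_one_right _).symm
          _ ≤ Nat.choose (w+1) (r-1) := lemA (r-2) 1 (r-1) (w+1) (by omega) (by omega) (by omega)
      omega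
    · have ih' := ih (by omega)
      have p1 : Nat.choose (y+1) r = Nat.choose y (r-1) + Nat.choose y r := pascal y r (by omega)
      have : 1 ≤ Nat.choose y (r-1) := Nat.choose_pos (by omega)
      omega


/-- existence of an initial segment of any cardinality -/
lemma exists_initseg (N r : ℕ) : ∀ s : ℕ, s ≤ Nat.choose N r →
    ∃ 𝒞 : Finset (Finset (Fin N)), IsInitSeg 𝒞 r ∧ #𝒞 = s := by
  intro s
  induction s with
  | zero => exact fun _ => ⟨∅, isInitSeg_empty, card_empty⟩
  | succ s ih =>
    intro hs
    obtain ⟨𝒞, h𝒞, hcard⟩ := ih (by omega)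
    have hsub : 𝒞 ⊆ powersetCard r (univ : Finset (Fin N)) :=
      fun A hA => mem_powersetCard.2 ⟨subset_univ _, h𝒞.1 hA⟩
    have hne : (powersetCard r (univ : Finset (Fin N)) \ 𝒞).Nonempty := by
      apply card_pos.1
      rw [card_sdiff_of_subset hsub, card_powersetCard, card_univ, Fintype.card_fin]
      omega
    obtain ⟨A, hAU, hAmin⟩ := Finset.exists_min_image _ toColex hne
    rw [mem_sdiff, mem_powersetCard] at hAU
    refine ⟨insert A 𝒞, ⟨?_, ?_⟩, ?_⟩
    · intro B hB
      rcases Finset.mem_insert.1 hB with rfl | hB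
      · exact hAU.1.2
      · exact h𝒞.1 hB
    · rintro S t hS ⟨hlt, htcard⟩
      rcases Finset.mem_insert.1 hS with h' | hS'
      · by_cases ht : t ∈ 𝒞
        · exact mem_insert_of_mem ht
        · exfalso
          have htU : t ∈ (powersetCard r (univ : Finset (Fin N)) \ 𝒞) := by
            rw [mem_sdiff, mem_powersetCard]; exact ⟨⟨subset_univ _, htcard⟩, ht⟩
          have hma := hAmin t htU
          rw [h'] at hlt
          exact absurd hma (not_le.2 hlt)
      · exact mem_insert_of_mem (h𝒞.2 hS' ⟨hlt, htcard⟩)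
    · rw [card_insert_of_notMem hAU.2, hcard]

/-- decomposition of a nonempty initial segment -/
lemma decomp {N r : ℕ} {𝒟 : Finset (Finset (Fin N))} (h : IsInitSeg 𝒟 r) (hne : 𝒟.Nonempty)
    (hr : 1 ≤ r) :
    ∃ (z : Fin N) (𝒟₁ : Finset (Finset (Fin N))),
      IsInitSeg 𝒟₁ (r-1) ∧ 𝒟₁.Nonempty ∧ (∀ S ∈ 𝒟₁, S ⊆ Finset.Iio z) ∧
      powersetCard r (Finset.Iio z) ⊆ 𝒟 ∧ 𝒟₁.image (insert z) ⊆ 𝒟 ∧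
      #𝒟 = Nat.choose (z : ℕ) r + #𝒟₁ ∧ #𝒟₁ ≤ Nat.choose (z : ℕ) (r-1) := by
  classical
  obtain ⟨s, hscard, rfl⟩ := h.exists_initSeg hne
  have hsne : s.Nonempty := card_pos.1 (by omega)
  set z := s.max' hsne with hz
  have hmem_le : ∀ t ∈ initSeg s, ∀ x ∈ t, x ≤ z := by
    intro t ht x hx
    have h2 := (mem_initSeg.1 ht).2
    exact Colex.forall_le_mono h2 (fun b hb => s.le_max' b hb) x hx
  have hlow : ∀ B : Finset (Fin N), B ⊆ Finset.Iio z → #B = r → B ∈ initSeg s := by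
    intro B hB hBcard
    have hzB : z ∉ B := fun hc => by simpa using hB hc
    have hlt : toColex B < toColex s := by
      rw [toColex_lt_toColex_iff_exists_forall_lt]
      exact ⟨z, s.max'_mem hsne, hzB, fun b hb _ => by simpa using hB hb⟩
    exact mem_initSeg.2 ⟨by omega, hlt.le⟩
  set 𝒟₁ : Finset (Finset (Fin N)) :=
    ((initSeg s).filter (fun t => z ∈ t)).image (fun t => t.erase z) with h𝒟₁def
  have hmem₁ : ∀ S ∈ 𝒟₁, S ⊆ Finset.Iio z := by
    intro S hS
    obtain ⟨t, ht, rfl⟩ := mem_image.1 hS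
    rw [mem_filter] at ht
    intro x hx
    rw [Finset.mem_erase] at hx
    exact Finset.mem_Iio.2 (lt_of_le_of_ne (hmem_le t ht.1 x hx.2) hx.1)
  have hins : 𝒟₁.image (insert z) ⊆ initSeg s := by
    intro t' ht'
    obtain ⟨S, hS, rfl⟩ := mem_image.1 ht'
    obtain ⟨t, ht, rfl⟩ := mem_image.1 hS
    rw [mem_filter] at ht
    rw [insert_erase ht.2]
    exact ht.1
  have hsized₁ : ∀ S ∈ 𝒟₁, #S = r - 1 := by
    intro S hS
    obtain ⟨t, ht, rfl⟩ := mem_image.1 hS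
    rw [mem_filter] at ht
    rw [card_erase_of_mem ht.2, h.1 ht.1]
  have hinit₁ : IsInitSeg 𝒟₁ (r-1) := by
    constructor
    · exact fun S hS => hsized₁ S hS
    · rintro S B hS ⟨hlt, hBcard⟩
      have hSsub := hmem₁ S hS
      have hBsub : ∀ x ∈ B, x < z := by
        intro x hx
        exact Colex.forall_lt_mono hlt.le (fun b hb => Finset.mem_Iio.1 (hSsub hb)) x hx
      have hzB : z ∉ B := fun hc => lt_irrefl z (hBsub z hc)
      have hzS : z ∉ S := fun hc => by simpa using hSsub hc
      have hltins : toColex (insert z B) < toColex (insert z S) := by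
        obtain ⟨a, haS, haB, hfa⟩ := toColex_lt_toColex_iff_exists_forall_lt.1 hlt
        rw [toColex_lt_toColex_iff_exists_forall_lt]
        refine ⟨a, mem_insert_of_mem haS, ?_, ?_⟩
        · intro hc
          rcases Finset.mem_insert.1 hc with rfl | hc
          · exact absurd (hSsub haS) (by simp)
          · exact haB hc
        · intro b hb hbn
          rcases Finset.mem_insert.1 hb with rfl | hb
          · exact absurd (mem_insert_self _ _) hbn
          · exact hfa b hb (fun hc => hbn (mem_insert_of_mem hc))
      have hSin : insert z S ∈ initSeg s := hins (mem_image_of_mem _ hS)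
      have hBin : insert z B ∈ initSeg s := by
        refine h.2 hSin ⟨hltins, ?_⟩
        rw [card_insert_of_notMem hzB, hBcard]
        omega
      have : insert z B ∈ (initSeg s).filter (fun t => z ∈ t) :=
        mem_filter.2 ⟨hBin, mem_insert_self _ _⟩
      have := mem_image_of_mem (fun t => t.erase z) this
      simpa only [erase_insert hzB] using this
  have hne₁ : 𝒟₁.Nonempty := by
    refine ⟨s.erase z, mem_image_of_mem _ (mem_filter.2 ⟨mem_initSeg_self, s.max'_mem hsne⟩)⟩
  have hfilter_eq : (initSeg s).filter (fun t => z ∉ t) = powersetCard r (Finset.Iio z) := by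
    ext B
    rw [mem_filter, mem_powersetCard]
    constructor
    · rintro ⟨hB, hzB⟩
      refine ⟨fun x hx => Finset.mem_Iio.2 (lt_of_le_of_ne (hmem_le B hB x hx) ?_), h.1 hB⟩
      rintro rfl; exact hzB hx
    · rintro ⟨hBsub, hBcard⟩
      exact ⟨hlow B hBsub hBcard, fun hc => by simpa using hBsub hc⟩
  have hpow : powersetCard r (Finset.Iio z) ⊆ initSeg s := by
    rw [← hfilter_eq]; exact filter_subset _ _
  have hcard₁ : #𝒟₁ = #((initSeg s).filter (fun t => z ∈ t)) := by
    rw [h𝒟₁def]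
    apply card_image_of_injOn
    intro t₁ ht₁ t₂ ht₂ hEq
    simp only at hEq
    rw [mem_coe, mem_filter] at ht₁ ht₂
    rw [← insert_erase ht₁.2, hEq, insert_erase ht₂.2]
  have hcardeq : #(initSeg s) = Nat.choose (z : ℕ) r + #𝒟₁ := by
    have := card_filter_add_card_filter_not (s := initSeg s) (p := fun t => z ∈ t)
    have hpc : #((initSeg s).filter (fun t => z ∉ t)) = Nat.choose (z : ℕ) r := by
      rw [hfilter_eq, card_powersetCard, Fin.card_Iio]
    omega
  have hcard₁le : #𝒟₁ ≤ Nat.choose (z : ℕ) (r-1) := by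
    have : 𝒟₁ ⊆ powersetCard (r-1) (Finset.Iio z) :=
      fun S hS => mem_powersetCard.2 ⟨hmem₁ S hS, hsized₁ S hS⟩
    have := card_le_card this
    rwa [card_powersetCard, Fin.card_Iio] at this
  exact ⟨z, 𝒟₁, hinit₁, hne₁, hmem₁, hpow, hins, hcardeq, hcard₁le⟩

lemma pow_subset_shadow {N : ℕ} {𝒟 : Finset (Finset (Fin N))} {r c : ℕ} (hcr : c ≤ r)
    {W : Finset (Fin N)} (hrW : r ≤ #W) (h : powersetCard r W ⊆ 𝒟) :
    powersetCard c W ⊆ ∂^[r-c] 𝒟 := by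
  intro t ht
  obtain ⟨htW, htc⟩ := mem_powersetCard.1 ht
  obtain ⟨A, htA, hAW, hAcard⟩ := exists_subsuperset_card_eq htW (by omega) hrW
  rw [mem_shadow_iterate_iff_exists_sdiff]
  exact ⟨A, h (mem_powersetCard.2 ⟨hAW, hAcard⟩), htA, by rw [card_sdiff_of_subset htA]; omega⟩

lemma insert_shadow {N : ℕ} {𝒟 𝒟₁ : Finset (Finset (Fin N))} {z : Fin N} {j : ℕ}
    (hz : ∀ S ∈ 𝒟₁, z ∉ S) (h : 𝒟₁.image (insert z) ⊆ 𝒟) :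
    (∂^[j] 𝒟₁).image (insert z) ⊆ ∂^[j] 𝒟 := by
  intro t' ht'
  obtain ⟨t, ht, rfl⟩ := mem_image.1 ht'
  obtain ⟨S, hS, htS, hcard⟩ := mem_shadow_iterate_iff_exists_sdiff.1 ht
  rw [mem_shadow_iterate_iff_exists_sdiff]
  refine ⟨insert z S, h (mem_image_of_mem _ hS), insert_subset_insert _ htS, ?_⟩
  have hzS : z ∉ S := hz S hS
  have : insert z S \ insert z t = S \ t := by
    ext x
    simp only [mem_sdiff, mem_insert]
    constructor
    · rintro ⟨hx1 | hx1, hx2⟩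
      · exact absurd (Or.inl hx1) hx2
      · exact ⟨hx1, fun hc => hx2 (Or.inr hc)⟩
    · rintro ⟨hx1, hx2⟩
      refine ⟨Or.inr hx1, ?_⟩
      rintro (rfl | hc)
      · exact hzS hx1
      · exact hx2 hc
  rw [this, hcard]

lemma notMem_shadow_iterate {N : ℕ} {𝒟₁ : Finset (Finset (Fin N))} {z : Fin N} {j : ℕ}
    (hz : ∀ S ∈ 𝒟₁, z ∉ S) : ∀ t ∈ ∂^[j] 𝒟₁, z ∉ t := by
  intro t ht
  obtain ⟨S, hS, htS, _⟩ := mem_shadow_iterate_iff_exists_sdiff.1 ht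
  exact fun hc => hz S hS (htS hc)

lemma count_shadow {N : ℕ} {𝒟 𝒟₁ : Finset (Finset (Fin N))} {z : Fin N} {c r : ℕ}
    (hz : ∀ S ∈ 𝒟₁, S ⊆ Finset.Iio z) (hins : 𝒟₁.image (insert z) ⊆ 𝒟) (hcr : c ≤ r)
    (hrW : r ≤ (z : ℕ)) (hpow : powersetCard r (Finset.Iio z) ⊆ 𝒟) :
    Nat.choose (z : ℕ) c + #(∂^[r-c] 𝒟₁) ≤ #(∂^[r-c] 𝒟) := by
  classical
  have hz' : ∀ S ∈ 𝒟₁, z ∉ S := fun S hS hc => by simpa using hz S hS hc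
  have h1 : powersetCard c (Finset.Iio z) ⊆ ∂^[r-c] 𝒟 :=
    pow_subset_shadow hcr (by rw [Fin.card_Iio]; exact hrW) hpow
  have h2 : (∂^[r-c] 𝒟₁).image (insert z) ⊆ ∂^[r-c] 𝒟 := insert_shadow hz' hins
  have hdisj : Disjoint (powersetCard c (Finset.Iio z)) ((∂^[r-c] 𝒟₁).image (insert z)) := by
    rw [disjoint_left]
    intro A hA hA'
    obtain ⟨t, _, rfl⟩ := mem_image.1 hA'
    have := (mem_powersetCard.1 hA).1 (mem_insert_self z t)
    simpa using this
  have himg : #((∂^[r-c] 𝒟₁).image (insert z)) = #(∂^[r-c] 𝒟₁) := by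
    apply card_image_of_injOn
    intro t₁ ht₁ t₂ ht₂ hEq
    have h₁ := notMem_shadow_iterate hz' t₁ ht₁
    have h₂ := notMem_shadow_iterate hz' t₂ ht₂
    rw [← erase_insert h₁, hEq, erase_insert h₂]
  calc Nat.choose (z : ℕ) c + #(∂^[r-c] 𝒟₁)
      = #(powersetCard c (Finset.Iio z)) + #((∂^[r-c] 𝒟₁).image (insert z)) := by
        rw [card_powersetCard, Fin.card_Iio, himg]
    _ = #(powersetCard c (Finset.Iio z) ∪ (∂^[r-c] 𝒟₁).image (insert z)) :=
        (card_union_of_disjoint hdisj).symm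
    _ ≤ #(∂^[r-c] 𝒟) := card_le_card (union_subset h1 h2)


/-- The key strengthened Kruskal–Katona-type estimate for initial segments:
if `#𝒟 < C(y,r)` then the `(r-c)`-iterated shadow has size at least
`#𝒟 + 1 + C(y,c) - C(y,r)`. -/
lemma claimW {N : ℕ} : ∀ r c y : ℕ, ∀ 𝒟 : Finset (Finset (Fin N)), IsInitSeg 𝒟 r → 𝒟.Nonempty →
    1 ≤ c → c < r → r + c ≤ y → #𝒟 < Nat.choose y r →
    (#𝒟 : ℤ) + 1 + Nat.choose y c ≤ (#(∂^[r - c] 𝒟) : ℤ) + Nat.choose y r := by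
  intro r
  induction r using Nat.strong_induction_on with
  | _ r IH =>
  intro c y 𝒟 h𝒟 hne hc hcr hrcy hsize
  obtain ⟨z, 𝒟₁, h𝒟₁, h𝒟₁ne, h𝒟₁sub, hpow, hins, hcardeq, h𝒟₁le⟩ := decomp h𝒟 hne (by omega)
  have hCyc_le : Nat.choose y c ≤ Nat.choose y r := lemA (r - c) c r y le_rfl hcr.le (by omega)
  by_cases hwr : r ≤ (z : ℕ)
  case neg =>
    -- here `#𝒟 = 1`
    have hz0 : Nat.choose (z : ℕ) r = 0 := Nat.choose_eq_zero_of_lt (by omega)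
    have h1le : Nat.choose (z : ℕ) (r-1) ≤ 1 := by
      rcases lt_or_ge (z : ℕ) (r-1) with h | h
      · rw [Nat.choose_eq_zero_of_lt h]; omega
      · have : (z : ℕ) = r - 1 := by omega
        rw [this, Nat.choose_self]
    have hD1pos : 1 ≤ #𝒟₁ := card_pos.2 h𝒟₁ne
    have hcard1 : #𝒟 = 1 := by omega
    obtain ⟨A, rfl⟩ := card_eq_one.1 hcard1
    have hAcard : #A = r := h𝒟.1 (mem_singleton_self A)
    have hshadow : ∂^[r - c] ({A} : Finset (Finset (Fin N))) = powersetCard c A := by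
      ext t
      rw [mem_shadow_iterate_iff_exists_sdiff, mem_powersetCard]
      constructor
      · rintro ⟨S, hS, htS, hcard⟩
        rw [mem_singleton] at hS; subst hS
        have := card_le_card htS
        rw [card_sdiff_of_subset htS] at hcard
        exact ⟨htS, by omega⟩
      · rintro ⟨htA, htc⟩
        exact ⟨A, mem_singleton_self A, htA, by rw [card_sdiff_of_subset htA]; omega⟩
    rw [hshadow, card_powersetCard, hAcard]
    have h2 : (r : ℕ) ≤ Nat.choose r c := by
      calc r = Nat.choose r 1 := (Nat.choose_one_right r).symm
        _ ≤ Nat.choose r c := lemA (c-1) 1 c r le_rfl hc (by omega)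
    have : (2 : ℕ) ≤ Nat.choose r c := by omega
    push_cast
    omega
  case pos =>
    have hcount := count_shadow h𝒟₁sub hins hcr.le hwr hpow
    set w := (z : ℕ) with hwdef
    set t₁ := #𝒟₁ with ht₁def
    have ht₁pos : 1 ≤ t₁ := card_pos.2 h𝒟₁ne
    have hwy : w < y := by
      by_contra hcon
      push_neg at hcon
      have hmono : Nat.choose y r ≤ Nat.choose w r := Nat.choose_mono r hcon
      omega
    by_cases hc1 : c = 1
    · subst hc1
      have hone : 1 ≤ #(∂^[r-1] 𝒟₁) := by
        apply card_pos.2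
        obtain ⟨S, hS⟩ := h𝒟₁ne
        refine ⟨∅, mem_shadow_iterate_iff_exists_sdiff.2 ⟨S, hS, empty_subset _, ?_⟩⟩
        rw [sdiff_empty, h𝒟₁.1 hS]
      have hp := pascal w r (by omega)
      have hCy1 : Nat.choose y 1 = y := Nat.choose_one_right y
      have hco : Nat.choose w 1 = w := Nat.choose_one_right w
      rcases eq_or_lt_of_le (show w + 1 ≤ y by omega) with heq | hlt2
      · push_cast [hCy1]
        push_cast [hco] at hcount
        omega
      · have hlemC := lemC (by omega) hwr y (by omega)
        push_cast [hCy1]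
        push_cast [hco] at hcount
        omega
    · -- c ≥ 2
      have hc2 : 2 ≤ c := by omega
      by_cases hfull : t₁ = Nat.choose w (r-1)
      · -- 𝒟₁ is the full level
        have h𝒟₁eq : 𝒟₁ = powersetCard (r-1) (Finset.Iio z) := by
          apply eq_of_subset_of_card_le
          · exact fun S hS => mem_powersetCard.2 ⟨h𝒟₁sub S hS, h𝒟₁.1 hS⟩
          · rw [card_powersetCard, Fin.card_Iio, ← hfull]
        have hsub2 : powersetCard (c-1) (Finset.Iio z) ⊆ ∂^[(r-1)-(c-1)] 𝒟₁ :=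
          pow_subset_shadow (by omega) (by rw [Fin.card_Iio]; omega) (h𝒟₁eq ▸ subset_rfl)
        have hidx : (r-1)-(c-1) = r - c := by omega
        rw [hidx] at hsub2
        have htwo : Nat.choose w (c-1) ≤ #(∂^[r-c] 𝒟₁) := by
          have := card_le_card hsub2
          rwa [card_powersetCard, Fin.card_Iio] at this
        have hpr := pascal w r (by omega)
        have hpc := pascal w c (by omega)
        -- #𝒟 = C(w+1, r)
        have hDfull : #𝒟 = Nat.choose (w+1) r := by omega
        have hw1y : w + 1 < y := by
          by_contra hcon
          push_neg at hcon
          have hmono : Nat.choose y r ≤ Nat.choose (w+1) r := Nat.choose_mono r hcon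
          omega
        rcases le_or_gt (w + 2) (r + c) with hsmall | hbig
        · -- w + 1 ≤ r + c - 1 : strict single-row inequality
          have hlt := lemB' (v := w+1) hcr (by omega) (by omega)
          push_cast [hpr, hpc]
          push_cast [pascal w r (by omega), pascal w c (by omega)] at hlt
          omega
        · -- w + 1 ≥ r + c : strict growth of the difference
          have hg := lgZ' hc hcr (v := w+1) (y := y) (by omega) (by omega)
          push_cast [pascal w r (by omega), pascal w c (by omega)] at hg
          push_cast [hpr, hpc]
          omega
      · -- t₁ < C(w, r-1) : apply induction hypothesis
        have ht₁lt : t₁ < Nat.choose w (r-1) := lt_of_le_of_ne h𝒟₁le hfull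
        rcases le_or_gt (r + c - 2) w with hwge | hwlt
        · -- y' = w
          have hIH := IH (r-1) (by omega) (c-1) w 𝒟₁ h𝒟₁ h𝒟₁ne (by omega) (by omega)
            (by omega) ht₁lt
          have hidx : (r-1)-(c-1) = r - c := by omega
          rw [hidx] at hIH
          have hg := lgZ hc hcr.le (w+1) y (by omega) (by omega)
          push_cast [pascal w r (by omega), pascal w c (by omega)] at hg
          push_cast at hIH hcount ⊢
          omega
        · -- y' = r + c - 2
          have ht₁lt' : t₁ < Nat.choose (r+c-2) (r-1) := by
            have hmono : Nat.choose w (r-1) ≤ Nat.choose (r+c-2) (r-1) :=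
              Nat.choose_mono _ (by omega)
            omega
          have hIH := IH (r-1) (by omega) (c-1) (r+c-2) 𝒟₁ h𝒟₁ h𝒟₁ne (by omega) (by omega)
            (by omega) ht₁lt'
          have hidx : (r-1)-(c-1) = r - c := by omega
          rw [hidx] at hIH
          have hsymm : Nat.choose (r+c-2) (c-1) = Nat.choose (r+c-2) (r-1) := by
            have := Nat.choose_symm (show r-1 ≤ r+c-2 by omega)
            rw [show r+c-2-(r-1) = c-1 by omega] at this
            exact this
          have hwle : Nat.choose w r ≤ Nat.choose w c := lemA' hcr.le (by omega)
          rw [hsymm] at hIH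
          push_cast at hIH hcount ⊢
          omega

set_option maxHeartbeats 1000000 in
/-- The main Kruskal–Katona-based bound: if `G` is a `k`-uniform family on a ground set `S` of
size `n-1`, with `C(n-4,k-3) < #G < C(n-3,k-2)`, then the family of `(k-1)`-subsets of `S`
disjoint from some member of `G` has size at least `C(n-4,k-1) + (#G - C(n-4,k-3)) + 1`. -/
lemma keybound {n k : ℕ} (hk : 3 ≤ k) (hn : 2*k < n) (G : Finset (Finset ℕ))
    (S : Finset ℕ) (hS : #S = n - 1)
    (hGsub : ∀ B ∈ G, B ⊆ S) (hGsized : ∀ B ∈ G, #B = k)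
    (hlow : Nat.choose (n-4) (k-3) < #G) (hhigh : #G < Nat.choose (n-3) (k-2))
    (K : Finset (Finset ℕ))
    (hK : ∀ C : Finset ℕ, C ⊆ S → #C = k - 1 → (∃ B ∈ G, C ∩ B = ∅) → C ∈ K) :
    Nat.choose (n-4) (k-1) + (#G - Nat.choose (n-4) (k-3)) + 1 ≤ #K := by
  classical
  set N := n - 1 with hN
  set m := n - 1 - k with hm
  have hSN : #S = N := hS
  set φ : Fin N ↪o ℕ := S.orderEmbOfFin hSN with hφ
  have hφS : ∀ x : Fin N, φ x ∈ S := fun x => S.orderEmbOfFin_mem hSN x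
  have hφsurj : ∀ b ∈ S, ∃ x : Fin N, φ x = b := by
    intro b hb
    have := S.range_orderEmbOfFin hSN
    have : b ∈ Set.range (S.orderEmbOfFin hSN) := by rw [this]; exact hb
    obtain ⟨x, hx⟩ := this
    exact ⟨x, hx⟩
  set posMap : Finset ℕ → Finset (Fin N) := fun B => univ.filter (fun x => φ x ∈ B)
    with hposMap
  have himgpos : ∀ B ∈ G, (posMap B).image φ = B := by
    intro B hB
    ext b
    simp only [hposMap, mem_image, mem_filter, mem_univ, true_and]
    constructor
    · rintro ⟨x, hx, rfl⟩; exact hx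
    · intro hb
      obtain ⟨x, hx⟩ := hφsurj b (hGsub B hB hb)
      exact ⟨x, hx ▸ hb, hx⟩
  have hposcard : ∀ B ∈ G, #(posMap B) = k := by
    intro B hB
    have hc := card_image_of_injective (posMap B) φ.injective
    rw [himgpos B hB] at hc
    rw [← hc]
    exact hGsized B hB
  set Hhat : Finset (Finset (Fin N)) := G.image (fun B => (posMap B)ᶜ) with hHhat
  have hHcard : #Hhat = #G := by
    rw [hHhat]
    apply card_image_of_injOn
    intro B₁ h₁ B₂ h₂ hEq
    rw [mem_coe] at h₁ h₂
    have : posMap B₁ = posMap B₂ := compl_injective hEq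
    calc B₁ = (posMap B₁).image φ := (himgpos B₁ h₁).symm
      _ = (posMap B₂).image φ := by rw [this]
      _ = B₂ := himgpos B₂ h₂
  have hHsized : (Hhat : Set (Finset (Fin N))).Sized m := by
    intro A hA
    rw [mem_coe, hHhat, mem_image] at hA
    obtain ⟨B, hB, rfl⟩ := hA
    rw [card_compl, Fintype.card_fin, hposcard B hB]
  -- get an initial segment of the same size
  have hGle : #G ≤ Nat.choose N m := by
    have e1 : Nat.choose (n-3) (k-2) = Nat.choose (n-3) m := by
      rw [← Nat.choose_symm (show k-2 ≤ n-3 by omega)]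
      congr 1
      omega
    have e2 : Nat.choose (n-3) m ≤ Nat.choose N m := Nat.choose_mono m (by omega)
    omega
  obtain ⟨𝒞, h𝒞init, h𝒞card⟩ := exists_initseg N m (#G) hGle
  have h𝒞ne : 𝒞.Nonempty := by
    apply card_pos.1
    rw [h𝒞card]
    omega
  have hkk : #(∂^[m - (k-1)] 𝒞) ≤ #(∂^[m - (k-1)] Hhat) :=
    Finset.iterated_kk hHsized (by omega) h𝒞init
  -- decompose the initial segment
  obtain ⟨z, 𝒟₁, h𝒟₁, h𝒟₁ne, h𝒟₁sub, hpow, hins, hcardeq, h𝒟₁le⟩ :=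
    decomp h𝒞init h𝒞ne (by omega)
  set w := (z : ℕ) with hwdef
  set t₁ := #𝒟₁ with ht₁def
  have ht₁pos : 1 ≤ t₁ := card_pos.2 h𝒟₁ne
  have hsymm1 : Nat.choose (n-4) (k-3) = Nat.choose (n-4) m := by
    rw [← Nat.choose_symm (show k-3 ≤ n-4 by omega)]
    congr 1
    omega
  have hsymm2 : Nat.choose (n-3) (k-2) = Nat.choose (n-3) m := by
    rw [← Nat.choose_symm (show k-2 ≤ n-3 by omega)]
    congr 1
    omega
  have hpasc : Nat.choose (n-3) m = Nat.choose (n-4) (m-1) + Nat.choose (n-4) m := by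
    have := pascal (n-4) m (by omega)
    rw [show n-4+1 = n-3 by omega] at this
    exact this
  have hw : w = n - 4 := by
    by_contra hcon
    rcases lt_or_gt_of_ne hcon with hlt | hgt
    · -- w ≤ n - 5
      have hple : Nat.choose (w+1) m ≤ Nat.choose (n-4) m := Nat.choose_mono m (by omega)
      have hpw := pascal w m (by omega)
      omega
    · -- w ≥ n - 3
      have hple : Nat.choose (n-3) m ≤ Nat.choose w m := Nat.choose_mono m (by omega)
      omega
  have ht₁lt : t₁ < Nat.choose (n-4) (m-1) := by
    rw [hw] at hcardeq
    omega
  -- apply the key claim to 𝒟₁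
  have hclaim := claimW (m-1) (k-2) (n-4) 𝒟₁ h𝒟₁ h𝒟₁ne (by omega) (by omega) (by omega) ht₁lt
  have hsymm3 : Nat.choose (n-4) (m-1) = Nat.choose (n-4) (k-2) := by
    rw [← Nat.choose_symm (show k-2 ≤ n-4 by omega)]
    congr 1
    omega
  have hidx : (m-1)-(k-2) = m - (k-1) := by omega
  rw [hidx, hsymm3] at hclaim
  have h𝒟₁shadow : t₁ + 1 ≤ #(∂^[m - (k-1)] 𝒟₁) := by
    push_cast at hclaim
    omega
  -- count the shadow of 𝒞
  have hcount := count_shadow h𝒟₁sub hins (show k-1 ≤ m by omega)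
    (show m ≤ (z:ℕ) by omega) hpow
  rw [show m - (k-1) = m - (k-1) from rfl] at hcount
  have h𝒞shadow : Nat.choose (n-4) (k-1) + t₁ + 1 ≤ #(∂^[m - (k-1)] 𝒞) := by
    rw [← hwdef, hw] at hcount
    omega
  -- map the iterated shadow of Hhat into K
  have hKbound : #(∂^[m - (k-1)] Hhat) ≤ #K := by
    apply card_le_card_of_injOn (fun t => t.image φ)
    · intro t ht
      have htsized : #t = k - 1 := by
        have hsz := hHsized.shadow_iterate (k := m - (k-1))
        have h' := hsz (mem_coe.2 ht)
        omega
      apply hK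
      · intro b hb
        rw [mem_image] at hb
        obtain ⟨x, _, rfl⟩ := hb
        exact hφS x
      · rw [card_image_of_injective _ φ.injective]; exact htsized
      · obtain ⟨A, hA, htA, _⟩ := mem_shadow_iterate_iff_exists_sdiff.1 ht
        rw [hHhat, mem_image] at hA
        obtain ⟨B, hB, rfl⟩ := hA
        refine ⟨B, hB, ?_⟩
        ext b
        simp only [mem_inter, notMem_empty, iff_false, not_and]
        intro hbimg hbB
        rw [mem_image] at hbimg
        obtain ⟨x, hx, rfl⟩ := hbimg
        have := htA hx
        rw [mem_compl, hposMap, mem_filter] at this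
        exact this ⟨mem_univ x, hbB⟩
    · intro t₁' h₁ t₂' h₂ hEq
      exact Finset.image_injective φ.injective hEq
  have e1 : #𝒞 = Nat.choose (n-4) m + t₁ := by
    rw [← hw]
    exact hcardeq
  have e2 : #G = Nat.choose (n-4) (k-3) + t₁ := by
    rw [hsymm1]
    omega
  omega

end Stmt5Aux


set_option maxHeartbeats 1000000 in
/-- Proposition `propfulleq`. -/
theorem statement5 (n k : ℕ) (hk : 3 ≤ k) (hn : 2 * k < n)
    (F : Finset (Finset ℕ)) (hF : F ⊆ (Finset.Icc 1 n).powersetCard k)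
    (hint : IntersectingFam F)
    (h1 : Nat.choose (n - 4) (k - 3) < diversity n F)
    (h2 : diversity n F < Nat.choose (n - 3) (k - 2)) :
    F.card < Nat.choose (n - 2) (k - 2) + 2 * Nat.choose (n - 3) (k - 2) := by
  classical
  have hn7 : 7 ≤ n := by omega
  obtain ⟨i, hi, hΔ⟩ := Finset.exists_mem_eq_sup (Finset.Icc 1 n)
    ⟨1, by simp only [Finset.mem_Icc]; omega⟩ (famDeg F)
  have hdegle : famDeg F i ≤ #F := card_filter_le _ _
  set γ := diversity n F with hγdef
  have hγeq : #F = famDeg F i + γ := by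
    have : maxDeg n F = famDeg F i := hΔ
    rw [hγdef]
    unfold diversity
    rw [this]
    omega
  have hmemF : ∀ A ∈ F, A ⊆ Finset.Icc 1 n ∧ #A = k := fun A hA => mem_powersetCard.1 (hF hA)
  set S := (Finset.Icc 1 n).erase i with hSdef
  have hScard : #S = n - 1 := by
    rw [hSdef, card_erase_of_mem hi, Nat.card_Icc]
    omega
  set G := F.filter (fun A => i ∉ A) with hGdef
  have hGcard : #G = γ := by
    have hsplit := card_filter_add_card_filter_not (s := F) (p := fun A => i ∈ A)
    have hfd : famDeg F i = #(F.filter (fun A => i ∈ A)) := rfl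
    have hGG : #G = #(F.filter (fun A => ¬ i ∈ A)) := rfl
    omega
  have hGsub : ∀ B ∈ G, B ⊆ S := by
    intro B hB
    rw [hGdef, mem_filter] at hB
    exact subset_erase.2 ⟨(hmemF B hB.1).1, hB.2⟩
  have hGsized : ∀ B ∈ G, #B = k := by
    intro B hB
    rw [hGdef, mem_filter] at hB
    exact (hmemF B hB.1).2
  set K := (powersetCard (k-1) S).filter (fun C => ∃ B ∈ G, C ∩ B = ∅) with hKdef
  have hKmem : ∀ C : Finset ℕ, C ⊆ S → #C = k - 1 → (∃ B ∈ G, C ∩ B = ∅) → C ∈ K := by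
    intro C hCs hCc hCex
    rw [hKdef, mem_filter]
    exact ⟨mem_powersetCard.2 ⟨hCs, hCc⟩, hCex⟩
  have hkey := Stmt5Aux.keybound hk hn G S hScard hGsub hGsized
    (by rw [hGcard]; exact h1) (by rw [hGcard]; exact h2) K hKmem
  set E := (F.filter (fun A => i ∈ A)).image (fun A => A.erase i) with hEdef
  have hEcard : #E = famDeg F i := by
    rw [hEdef]
    apply card_image_of_injOn
    intro A₁ h₁ A₂ h₂ hEq
    rw [mem_coe, mem_filter] at h₁ h₂
    simp only at hEq
    rw [← insert_erase h₁.2, hEq, insert_erase h₂.2]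
  have hEsub : E ⊆ powersetCard (k-1) S := by
    intro e he
    rw [hEdef, mem_image] at he
    obtain ⟨A, hA, rfl⟩ := he
    rw [mem_filter] at hA
    refine mem_powersetCard.2 ⟨?_, ?_⟩
    · rw [hSdef]
      exact erase_subset_erase i (hmemF A hA.1).1
    · rw [card_erase_of_mem hA.2, (hmemF A hA.1).2]
  have hKsub : K ⊆ powersetCard (k-1) S := by
    rw [hKdef]; exact filter_subset _ _
  have hEK : Disjoint E K := by
    rw [disjoint_left]
    intro e heE heK
    rw [hEdef, mem_image] at heE
    obtain ⟨A, hA, rfl⟩ := heE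
    rw [mem_filter] at hA
    rw [hKdef, mem_filter] at heK
    obtain ⟨-, B, hBG, hdisj⟩ := heK
    have hBF : B ∈ F := mem_of_mem_filter B hBG
    have hiB : i ∉ B := by
      rw [hGdef, mem_filter] at hBG
      exact hBG.2
    obtain ⟨x, hx⟩ := hint A hA.1 B hBF
    rw [mem_inter] at hx
    have hxe : x ∈ A.erase i ∩ B := by
      rw [mem_inter, mem_erase]
      exact ⟨⟨fun hc => hiB (hc ▸ hx.2), hx.1⟩, hx.2⟩
    rw [hdisj] at hxe
    exact notMem_empty x hxe
  have hunion : #E + #K ≤ Nat.choose (n-1) (k-1) := by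
    rw [← card_union_of_disjoint hEK]
    have := card_le_card (union_subset hEsub hKsub)
    rwa [card_powersetCard, hScard] at this
  -- final arithmetic
  obtain ⟨b, rfl⟩ : ∃ b, k = b + 3 := ⟨k - 3, by omega⟩
  obtain ⟨a, rfl⟩ : ∃ a, n = a + 4 := ⟨n - 4, by omega⟩
  simp only [show a + 4 - 4 = a by omega, show b + 3 - 3 = b by omega,
    show a + 4 - 3 = a + 1 by omega, show b + 3 - 2 = b + 1 by omega,
    show a + 4 - 1 = a + 3 by omega, show b + 3 - 1 = b + 2 by omega,
    show a + 4 - 2 = a + 2 by omega] at hkey hunion h1 h2 ⊢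
  have q1 : (a+3).choose (b+2) = (a+2).choose (b+1) + (a+2).choose (b+2) := by
    rw [show a + 3 = (a+2) + 1 by omega, show b + 2 = (b+1) + 1 by omega]
    exact Nat.choose_succ_succ _ _
  have q2 : (a+2).choose (b+2) = (a+1).choose (b+1) + (a+1).choose (b+2) := by
    rw [show a + 2 = (a+1) + 1 by omega, show b + 2 = (b+1) + 1 by omega]
    exact Nat.choose_succ_succ _ _
  have q3 : (a+1).choose (b+2) = a.choose (b+1) + a.choose (b+2) := by
    rw [show a + 1 = a + 1 by omega, show b + 2 = (b+1) + 1 by omega]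
    exact Nat.choose_succ_succ _ _
  have q4 : (a+1).choose (b+1) = a.choose b + a.choose (b+1) := by
    rw [show b + 1 = b + 1 by omega]
    exact Nat.choose_succ_succ _ _
  omega
end

section
/- Let 1 ≤ t < k ≤ n. If an intersecting family F of k-element subsets of [n] with maximal degree Δ and diversity γ satisfies Δ + (k/(k−t))·γ ≤ C(n−1,k−1), then δ_t(F) ≤ C(n−t−1, k−t−1). -/
open Finset

/-
An averaging argument. Let `i` be an element of maximal
degree `Δ` and count pairs `(S, A)` with `A ∈ F` and `S` a `t`-subset of `A \ {i}`. Sets through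
`i` contribute `C(k-1,t)` each and the `γ` others `C(k,t) = k/(k-t) · C(k-1,t)` each, so the
hypothesis bounds the count by `C(n-1,k-1) C(k-1,t) = C(n-1,t) C(n-t-1,k-t-1)`. Since there are
`C(n-1,t)` such sets `S`, one of them has degree at most `C(n-t-1,k-t-1)`.
-/

theorem sum_tDeg_powersetCard (F : Finset (Finset ℕ)) (P : Finset ℕ) (t : ℕ) :
    ∑ S ∈ P.powersetCard t, tDeg F S = ∑ A ∈ F, (A ∩ P).card.choose t := by
  simp only [tDeg, card_filter]
  rw [sum_comm]
  refine sum_congr rfl fun A _ => ?_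
  rw [← card_filter, ← card_powersetCard]
  congr 1
  ext S
  simp only [mem_filter, mem_powersetCard, subset_inter_iff]
  tauto

theorem sum_tDeg_powersetCard_erase {U : Finset ℕ} {k : ℕ} {F : Finset (Finset ℕ)}
    (hF : F ⊆ U.powersetCard k) (i t : ℕ) :
    ∑ S ∈ (U.erase i).powersetCard t, tDeg F S
      = famDeg F i * (k - 1).choose t + (F.card - famDeg F i) * k.choose t := by
  have hcard : ∀ A ∈ F, A ⊆ U ∧ A.card = k := fun A hA => mem_powersetCard.1 (hF hA)
  have hthrough : ∀ A ∈ F.filter (i ∈ ·), ((A ∩ U.erase i).card).choose t = (k - 1).choose t := by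
    intro A hA
    obtain ⟨hAF, hiA⟩ := mem_filter.1 hA
    rw [inter_erase, inter_eq_left.2 (hcard A hAF).1, card_erase_of_mem hiA, (hcard A hAF).2]
  have havoid : ∀ A ∈ F.filter (i ∉ ·), ((A ∩ U.erase i).card).choose t = k.choose t := by
    intro A hA
    obtain ⟨hAF, hiA⟩ := mem_filter.1 hA
    rw [inter_erase, inter_eq_left.2 (hcard A hAF).1, erase_eq_of_notMem hiA, (hcard A hAF).2]
  have hsplit := card_filter_add_card_filter_not (s := F) (p := (i ∈ ·))
  rw [sum_tDeg_powersetCard, ← sum_filter_add_sum_filter_not F (i ∈ ·), sum_congr rfl hthrough,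
    sum_congr rfl havoid, sum_const, sum_const, smul_eq_mul, smul_eq_mul, famDeg]
  congr 2
  omega

theorem mul_choose_add_le_of_weighted_le {D γ N k t : ℕ} (htk : t < k)
    (h : (D : ℚ) + (k : ℚ) / ((k : ℚ) - (t : ℚ)) * (γ : ℚ) ≤ (N : ℚ)) :
    D * (k - 1).choose t + γ * k.choose t ≤ N * (k - 1).choose t := by
  have hkt : (0 : ℚ) < (k : ℚ) - (t : ℚ) := sub_pos.2 (by exact_mod_cast htk)
  have hchoose : ((k - 1).choose t : ℚ) * k = (k.choose t : ℚ) * ((k : ℚ) - (t : ℚ)) := by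
    have := Nat.choose_mul_succ_eq (k - 1) t
    rw [Nat.sub_add_cancel (by omega : 1 ≤ k)] at this
    have hcast := congrArg (Nat.cast : ℕ → ℚ) this
    push_cast [Nat.cast_sub htk.le] at hcast
    exact hcast
  have hk_choose : (k.choose t : ℚ) = (k : ℚ) / ((k : ℚ) - (t : ℚ)) * (k - 1).choose t := by
    field_simp
    linarith
  have : ((D * (k - 1).choose t + γ * k.choose t : ℕ) : ℚ) ≤ (N * (k - 1).choose t : ℕ) := by
    push_cast
    rw [hk_choose]
    nlinarith [(by positivity : (0 : ℚ) ≤ (k - 1).choose t)]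
  exact_mod_cast this

theorem statement17_general (n k t : ℕ) (htk : t < k) (hkn : k ≤ n)
    (F : Finset (Finset ℕ)) (hF : F ⊆ (Finset.Icc 1 n).powersetCard k)
    (hcond : (maxDeg n F : ℚ) +
        (k : ℚ) / ((k : ℚ) - (t : ℚ)) * (diversity n F : ℚ) ≤
      (Nat.choose (n - 1) (k - 1) : ℚ)) :
    ∃ S ∈ (Finset.Icc 1 n).powersetCard t,
      tDeg F S ≤ Nat.choose (n - t - 1) (k - t - 1) := by
  obtain ⟨i, hi, hΔ⟩ := exists_mem_eq_sup (Icc 1 n) (nonempty_Icc.2 (by omega)) (famDeg F)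
  have hmax : maxDeg n F = famDeg F i := hΔ
  rw [diversity, hmax] at hcond
  have hcount : ∑ S ∈ ((Icc 1 n).erase i).powersetCard t, tDeg F S
      ≤ ∑ _S ∈ ((Icc 1 n).erase i).powersetCard t, (n - t - 1).choose (k - t - 1) := by
    rw [sum_tDeg_powersetCard_erase hF, sum_const, card_powersetCard, card_erase_of_mem hi,
      Nat.card_Icc, smul_eq_mul]
    calc _ ≤ (n - 1).choose (k - 1) * (k - 1).choose t := mul_choose_add_le_of_weighted_le htk hcond
      _ = (n + 1 - 1 - 1).choose t * (n - t - 1).choose (k - t - 1) := by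
        rw [Nat.choose_mul (by omega)]
        congr 2 <;> omega
  obtain ⟨S, hS, hle⟩ := exists_le_of_sum_le
    (powersetCard_nonempty.2 (by rw [card_erase_of_mem hi, Nat.card_Icc]; omega)) hcount
  exact ⟨S, powersetCard_mono (erase_subset i _) hS, hle⟩

/-- Proposition `stat1`. -/
theorem statement17 (n k t : ℕ) (ht : 1 ≤ t) (htk : t < k) (hkn : k ≤ n)
    (F : Finset (Finset ℕ)) (hF : F ⊆ (Finset.Icc 1 n).powersetCard k)
    (hint : IntersectingFam F)
    (hcond : (maxDeg n F : ℚ) +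
        (k : ℚ) / ((k : ℚ) - (t : ℚ)) * (diversity n F : ℚ) ≤
      (Nat.choose (n - 1) (k - 1) : ℚ)) :
    ∃ S ∈ (Finset.Icc 1 n).powersetCard t,
      tDeg F S ≤ Nat.choose (n - t - 1) (k - t - 1) :=
  statement17_general n k t htk hkn F hF hcond
end
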